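/- Let G be a countably infinite cancellative semigroup and let (F_n) be a Følner sequence in G such that for every α ∈ (0,1) one has ∑_{n=1}^∞ α^{|F_n|} < ∞. Then for λ-almost every x ∈ {0,1}^G, for every continuous function f : {0,1}^G → ℝ (with {0,1} discrete and {0,1}^G carrying the product topology), (1/|F_n|)·∑_{g ∈ F_n} f(σ_g x) → ∫ f dλ as n → ∞, where σ_g x is the function h ↦ x(h·g). -/

import Mathlib

/-!
Fix a finite window `K ⊆ G` and a pattern `b : K → Bool`, and let `E g` be the event that `x`
shows `b` on the translate `K g`. These events are not independent, but they are along any set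
of `g` whose translates `K g` are pairwise disjoint, and by left cancellation each `K g` meets
at most `|K|²` others, so a greedy colouring splits `F n` into `|K|² + 1` such classes.
Hoeffding's inequality on each class bounds the probability that the frequency of `b` in `F n`
is `ε`-far from `2^{-|K|}` by `C α^{|F n|}`, which is summable, so by Borel–Cantelli all
pattern frequencies converge almost surely. A continuous `f` is uniformly close to a function
of finitely many coordinates, whose ergodic averages are combinations of pattern frequencies.
-/

open Filter MeasureTheory

open scoped Classical in
def IsFolner {G : Type*} [Mul G] (F : ℕ → Finset G) : Prop :=
  (∀ n, (F n).Nonempty) ∧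
  ∀ g : G, Tendsto
    (fun n => (((F n).filter (fun h => g * h ∈ F n)).card : ℝ) / (F n).card)
    atTop (nhds 1)

open ProbabilityTheory Finset Real Topology
open scoped NNReal ENNReal Classical

section Concentration

variable {Ω ι : Type*} [MeasurableSpace Ω] {μ : Measure Ω}

theorem measureReal_abs_sum_ge_le_of_iIndepFun [IsFiniteMeasure μ] {X : ι → Ω → ℝ}
    (hX : iIndepFun X μ) {c : ι → ℝ≥0} {s : Finset ι}
    (h_subG : ∀ i ∈ s, HasSubgaussianMGF (X i) (c i) μ) {t : ℝ} (ht : 0 ≤ t) :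
    μ.real {ω | t ≤ |∑ i ∈ s, X i ω|} ≤ 2 * exp (-t ^ 2 / (2 * ∑ i ∈ s, c i)) := by
  have hX_neg : iIndepFun (fun i => -X i) μ := hX.comp (fun _ x => -x) fun _ => measurable_neg
  calc μ.real {ω | t ≤ |∑ i ∈ s, X i ω|}
      ≤ μ.real ({ω | t ≤ ∑ i ∈ s, X i ω} ∪ {ω | t ≤ ∑ i ∈ s, (-X i) ω}) := by
        refine measureReal_mono fun ω hω => ?_
        simpa only [Set.mem_union, Set.mem_ofPred_eq, Pi.neg_apply, sum_neg_distrib] using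
          le_abs.mp hω
    _ ≤ _ := measureReal_union_le _ _
    _ ≤ 2 * exp (-t ^ 2 / (2 * ∑ i ∈ s, c i)) := by
        rw [two_mul]
        exact add_le_add (HasSubgaussianMGF.measure_sum_ge_le_of_iIndepFun hX h_subG ht)
          (HasSubgaussianMGF.measure_sum_ge_le_of_iIndepFun hX_neg (fun i hi => (h_subG i hi).neg)
            ht)

theorem measureReal_abs_sum_indicator_sub_ge_le [IsProbabilityMeasure μ] {E : ι → Set Ω}
    {s : Finset ι} (hE : ∀ i, MeasurableSet (E i)) (hE_indep : iIndepSet (fun i : s => E i) μ)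
    {q : ℝ} (hq : ∀ i ∈ s, μ.real (E i) = q) {t : ℝ} (ht : 0 < t) {m : ℕ} (hm : #s ≤ m) :
    μ.real {ω | t ≤ |∑ i ∈ s, ((E i).indicator 1 ω - q)|} ≤ 2 * exp (-2 * t ^ 2 / m) := by
  rcases s.eq_empty_or_nonempty with rfl | hs
  · simp [not_le.mpr ht, (exp_pos _).le]
  have h_subG (i : s) : HasSubgaussianMGF (fun ω => (E i).indicator 1 ω - q) (1 / 4) μ := by
    have h := hasSubgaussianMGF_of_mem_Icc (μ := μ) (X := (E i).indicator 1) (a := 0) (b := 1)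
      (measurable_one.indicator (hE i)).aemeasurable
      (ae_of_all _ fun ω => by unfold Set.indicator; split <;> simp)
    rw [integral_indicator_one (hE i), hq i i.2] at h
    convert h using 1
    norm_num
  have h_indep : iIndepFun (fun (i : s) ω => (E i).indicator 1 ω - q) μ :=
    hE_indep.iIndepFun_indicator.comp (fun _ x => x - q) fun _ => measurable_sub_const q
  have h := measureReal_abs_sum_ge_le_of_iIndepFun h_indep (s := univ) (fun i _ => h_subG i) ht.le
  have h_coe_sort (ω : Ω) :
      ∑ i : s, ((E i).indicator 1 ω - q) = ∑ i ∈ s, ((E i).indicator 1 ω - q) :=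
    sum_coe_sort s fun i => (E i).indicator 1 ω - q
  simp only [h_coe_sort, sum_const, card_univ, Fintype.card_coe, nsmul_eq_mul, NNReal.coe_mul,
    NNReal.coe_natCast] at h
  have hs_pos : (0 : ℝ) < #s := by exact_mod_cast hs.card_pos
  have h_exp : -t ^ 2 / (2 * (#s * ((1 / 4 : ℝ≥0) : ℝ))) = -2 * t ^ 2 / #s := by
    push_cast; field_simp; ring
  refine h.trans (mul_le_mul_of_nonneg_left (exp_le_exp.mpr ?_) zero_le_two)
  rw [h_exp, neg_mul, neg_div, neg_div, neg_le_neg_iff]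
  exact div_le_div_of_nonneg_left (by positivity) hs_pos (by exact_mod_cast hm)

theorem measureReal_abs_sum_indicator_sub_ge_le_of_coloring [IsProbabilityMeasure μ]
    {E : ι → Set Ω} (hE : ∀ i, MeasurableSet (E i)) {q : ℝ} (hq : ∀ i, μ.real (E i) = q)
    {A : Finset ι} (hA : A.Nonempty) {D : ℕ} (c : ι → Fin D)
    (hc : ∀ j, iIndepSet (fun i : ({i ∈ A | c i = j} : Finset ι) => E i) μ) {ε : ℝ} (hε : 0 < ε) :
    μ.real {ω | ε * #A ≤ |∑ i ∈ A, ((E i).indicator 1 ω - q)|}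
      ≤ 2 * D * exp (-2 * (ε / D) ^ 2 * #A) := by
  have hD : (0 : ℝ) < D := by exact_mod_cast (c hA.choose).pos
  have hA_pos : (0 : ℝ) < #A := by exact_mod_cast hA.card_pos
  have : Nonempty (Fin D) := ⟨c hA.choose⟩
  set Z : Ω → ι → ℝ := fun ω i => (E i).indicator 1 ω - q
  set t := ε * #A / D
  have ht : 0 < t := by positivity
  -- pigeonhole: a deviation `ε * #A` of the whole sum forces a deviation `t` on one colour class
  have h_sub : {ω | ε * #A ≤ |∑ i ∈ A, Z ω i|} ⊆ ⋃ j, {ω | t ≤ |∑ i ∈ A with c i = j, Z ω i|} := by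
    intro ω hω
    by_contra h
    simp only [Set.mem_iUnion, Set.mem_ofPred_eq, not_exists, not_le] at h
    have : |∑ i ∈ A, Z ω i| < ε * #A := calc
      |∑ i ∈ A, Z ω i| = |∑ j, ∑ i ∈ A with c i = j, Z ω i| := by rw [sum_fiberwise]
      _ ≤ ∑ j, |∑ i ∈ A with c i = j, Z ω i| := abs_sum_le_sum_abs _ _
      _ < ∑ _j : Fin D, t := sum_lt_sum_of_nonempty univ_nonempty fun j _ => h j
      _ = ε * #A := by
        simp only [sum_const, card_univ, Fintype.card_fin, nsmul_eq_mul, t]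
        field_simp
    exact (not_le.mpr this) hω
  calc μ.real {ω | ε * #A ≤ |∑ i ∈ A, Z ω i|}
      ≤ ∑ j, μ.real {ω | t ≤ |∑ i ∈ A with c i = j, Z ω i|} :=
        (measureReal_mono h_sub).trans (measureReal_iUnion_fintype_le _)
    _ ≤ ∑ _j : Fin D, 2 * exp (-2 * t ^ 2 / #A) := sum_le_sum fun j _ =>
        measureReal_abs_sum_indicator_sub_ge_le hE (hc j) (fun i _ => hq i) ht (card_filter_le _ _)
    _ = 2 * D * exp (-2 * (ε / D) ^ 2 * #A) := by
        simp only [sum_const, card_univ, Fintype.card_fin, nsmul_eq_mul, t]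
        field_simp

theorem ae_tendsto_of_forall_summable_measureReal_abs_sub_ge [IsFiniteMeasure μ]
    {Y : ℕ → Ω → ℝ} {a : ℝ} (h : ∀ ε > 0, Summable fun n => μ.real {ω | ε ≤ |Y n ω - a|}) :
    ∀ᵐ ω ∂μ, Tendsto (fun n => Y n ω) atTop (𝓝 a) := by
  have h_ev (k : ℕ) : ∀ᵐ ω ∂μ, ∀ᶠ n in atTop, |Y n ω - a| < 1 / (k + 1) := by
    have h_tsum : ∑' n, μ {ω | 1 / (k + 1) ≤ |Y n ω - a|} ≠ ∞ := by
      simp_rw [← fun n => ofReal_measureReal (μ := μ) (s := {ω | 1 / (k + 1) ≤ |Y n ω - a|})]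
      rw [← ENNReal.ofReal_tsum_of_nonneg (fun _ => measureReal_nonneg) (h _ (by positivity))]
      exact ENNReal.ofReal_ne_top
    filter_upwards [ae_eventually_notMem h_tsum] with ω hω
    exact hω.mono fun n hn => not_le.mp hn
  filter_upwards [ae_all_iff.mpr h_ev] with ω hω
  refine Metric.tendsto_nhds.mpr fun ε hε => ?_
  obtain ⟨k, hk⟩ := exists_nat_one_div_lt hε
  exact (hω k).mono fun n hn => hn.trans hk

end Concentration

theorem exists_coloring_of_card_filter_le {α : Type*} {r : α → α → Prop} [DecidableRel r]
    (hr : ∀ a b, r a b → r b a) {d : ℕ} (hd : ∀ a (A : Finset α), #{b ∈ A | r a b} ≤ d)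
    (A : Finset α) : ∃ c : α → Fin (d + 1), ∀ a ∈ A, ∀ b ∈ A, a ≠ b → r a b → c a ≠ c b := by
  induction A using Finset.induction_on with
  | empty => exact ⟨fun _ => 0, by simp⟩
  | @insert a A ha ih =>
    obtain ⟨c, hc⟩ := ih
    obtain ⟨i, hi⟩ : ∃ i, i ∉ image c {b ∈ A | r a b} := by
      by_contra! h
      have h_univ : (univ : Finset (Fin (d + 1))) ⊆ image c {b ∈ A | r a b} := fun i _ => h i
      have := (card_le_card h_univ).trans (card_image_le.trans (hd a A))
      simp at this
    refine ⟨Function.update c a i, ?_⟩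
    have hc_new : ∀ b ∈ A, r a b → Function.update c a i a ≠ Function.update c a i b := by
      intro b hb hab
      rw [Function.update_self, Function.update_of_ne (ne_of_mem_of_not_mem hb ha)]
      exact fun h => hi (mem_image.mpr ⟨b, mem_filter.mpr ⟨hb, hab⟩, h.symm⟩)
    intro x hx y hy hxy hr_xy
    rcases mem_insert.mp hx with rfl | hxA <;> rcases mem_insert.mp hy with rfl | hyA
    · exact absurd rfl hxy
    · exact hc_new y hyA hr_xy
    · exact (hc_new x hxA (hr _ _ hr_xy)).symm
    · rw [Function.update_of_ne (ne_of_mem_of_not_mem hxA ha),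
        Function.update_of_ne (ne_of_mem_of_not_mem hyA ha)]
      exact hc x hxA y hyA hxy hr_xy

section Translates

variable {G : Type*} [Mul G] [IsLeftCancelMul G]

theorem card_filter_not_disjoint_translates_le (K A : Finset G) (g : G) :
    #{g' ∈ A | ¬Disjoint ((· * g) '' (K : Set G)) ((· * g') '' (K : Set G))} ≤ #K * #K := by
  have h_sub : {g' ∈ A | ¬Disjoint ((· * g) '' (K : Set G)) ((· * g') '' (K : Set G))}
      ⊆ (K ×ˢ K).biUnion fun p => {g' ∈ A | p.2 * g' = p.1 * g} := by
    intro g' hg'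
    obtain ⟨hg'A, h_inter⟩ := mem_filter.mp hg'
    obtain ⟨_, ⟨h, hh, rfl⟩, ⟨h', hh', he⟩⟩ := Set.not_disjoint_iff.mp h_inter
    exact mem_biUnion.mpr ⟨(h, h'), mem_product.mpr ⟨hh, hh'⟩, mem_filter.mpr ⟨hg'A, he⟩⟩
  refine (card_le_card h_sub).trans ((card_biUnion_le_card_mul _ _ 1 fun p _ => ?_).trans ?_)
  · exact card_le_one.mpr fun a ha a' ha' =>
      mul_left_cancel ((mem_filter.mp ha).2.trans (mem_filter.mp ha').2.symm)
  · simp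

theorem exists_coloring_pairwiseDisjoint_translates (K A : Finset G) :
    ∃ c : G → Fin (#K * #K + 1), ∀ j,
      (({g ∈ A | c g = j} : Finset G) : Set G).PairwiseDisjoint
        fun g => (· * g) '' (K : Set G) := by
  obtain ⟨c, hc⟩ := exists_coloring_of_card_filter_le
    (r := fun g g' => ¬Disjoint ((· * g) '' (K : Set G)) ((· * g') '' (K : Set G)))
    (fun _ _ h h' => h h'.symm) (fun g A' => card_filter_not_disjoint_translates_le K A' g) A
  refine ⟨c, fun j g hg g' hg' hne => ?_⟩
  simp only [coe_filter, Set.mem_ofPred_eq] at hg hg'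
  by_contra h
  exact hc g hg.1 g' hg'.1 hne h (hg.2.trans hg'.2.symm)

end Translates

section Bernoulli

variable {G : Type*}

def IsBernoulliMeasure (μ : Measure (G → Bool)) : Prop :=
  ∀ (K : Finset G) (B : G → Bool), μ {x | ∀ h ∈ K, x h = B h} = (2 : ℝ≥0∞)⁻¹ ^ #K

def pattern [Mul G] (K : Finset G) (g : G) (x : G → Bool) : K → Bool := fun h => x (h * g)

theorem measurable_pattern [Mul G] (K : Finset G) (g : G) : Measurable (pattern K g) :=
  measurable_pi_lambda _ fun _ => measurable_pi_apply _

namespace IsBernoulliMeasure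

variable {μ : Measure (G → Bool)}

theorem isProbabilityMeasure (hμ : IsBernoulliMeasure μ) : IsProbabilityMeasure μ :=
  ⟨by simpa using hμ ∅ fun _ => false⟩

theorem measure_comp_eq (hμ : IsBernoulliMeasure μ) {α : Type*} [Fintype α] {φ : α → G}
    (hφ : φ.Injective) (c : α → Bool) :
    μ {x | x ∘ φ = c} = (2 : ℝ≥0∞)⁻¹ ^ Fintype.card α := by
  have h_set : {x : G → Bool | x ∘ φ = c}
      = {x | ∀ u ∈ univ.image φ, x u = Function.extend φ c (fun _ => false) u} := by
    ext x
    simp [funext_iff, hφ.extend_apply]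
  rw [h_set, hμ, card_image_of_injective _ hφ, card_univ]

theorem measureReal_cylinder_eq (hμ : IsBernoulliMeasure μ) (K : Finset G) (b : K → Bool) :
    μ.real {z | (fun h : K => z h) = b} = (2⁻¹ : ℝ) ^ #K := by
  rw [measureReal_def, show μ {z | (fun h : K => z h) = b} = _ from
    hμ.measure_comp_eq Subtype.val_injective b]
  simp

variable [Mul G] [IsRightCancelMul G]

theorem measure_pattern_eq (hμ : IsBernoulliMeasure μ) (K : Finset G) (g : G)
    (b : K → Bool) : μ {x | pattern K g x = b} = (2 : ℝ≥0∞)⁻¹ ^ #K := by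
  have hφ : (fun h : K => h.1 * g).Injective := fun h h' he => Subtype.ext (mul_right_cancel he)
  exact (hμ.measure_comp_eq hφ b).trans (by rw [Fintype.card_coe])

theorem measureReal_pattern_eq (hμ : IsBernoulliMeasure μ) (K : Finset G) (g : G)
    (b : K → Bool) : μ.real {x | pattern K g x = b} = (2⁻¹ : ℝ) ^ #K := by
  simp [measureReal_def, hμ.measure_pattern_eq]

theorem iIndepSet_pattern (hμ : IsBernoulliMeasure μ) {K T : Finset G}
    (hT : (T : Set G).PairwiseDisjoint fun g => (· * g) '' (K : Set G)) (b : K → Bool) :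
    iIndepSet (fun g : T => {x | pattern K g x = b}) μ := by
  have := hμ.isProbabilityMeasure
  refine (iIndepSet_iff_meas_biInter (f := fun g : T => {x | pattern K g x = b}) fun g =>
    measurable_pattern K g.1 (measurableSet_singleton b)).mpr fun s => ?_
  set φ : s × K → G := fun p => p.2.1 * p.1.1.1
  have hφ : φ.Injective := by
    rintro ⟨g, h⟩ ⟨g', h'⟩ (he : h.1 * g.1.1 = h'.1 * g'.1.1)
    obtain rfl : g = g' := by
      by_contra hne
      exact Set.disjoint_left.mp (hT g.1.2 g'.1.2 fun h => hne (Subtype.ext (Subtype.ext h)))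
        ⟨h, h.2, rfl⟩ ⟨h', h'.2, he.symm⟩
    rw [Subtype.ext (mul_right_cancel he)]
  have h_inter : ⋂ g ∈ s, {x | pattern K g x = b} = {x | x ∘ φ = fun p => b p.2} := by
    ext x
    simp [funext_iff, pattern, φ]
  rw [h_inter, hμ.measure_comp_eq hφ]
  simp [hμ.measure_pattern_eq, Fintype.card_prod, pow_mul']

theorem exists_measureReal_abs_card_pattern_div_sub_ge_le [IsLeftCancelMul G]
    (hμ : IsBernoulliMeasure μ) (K : Finset G) (b : K → Bool) {ε : ℝ} (hε : 0 < ε) :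
    ∃ C, ∃ α ∈ Set.Ioo (0 : ℝ) 1, ∀ A : Finset G, A.Nonempty →
      μ.real {x | ε ≤ |(#{g ∈ A | pattern K g x = b} : ℝ) / #A - 2⁻¹ ^ #K|} ≤ C * α ^ #A := by
  have := hμ.isProbabilityMeasure
  set D := #K * #K + 1
  refine ⟨2 * D, exp (-2 * (ε / D) ^ 2), ⟨exp_pos _, exp_lt_one_iff.mpr ?_⟩, fun A hA => ?_⟩
  · have : (0 : ℝ) < D := by positivity
    have : 0 < ε / D := by positivity
    nlinarith
  obtain ⟨c, hc⟩ := exists_coloring_pairwiseDisjoint_translates K A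
  have hA_pos : (0 : ℝ) < #A := by exact_mod_cast hA.card_pos
  have h_set : {x | ε ≤ |(#{g ∈ A | pattern K g x = b} : ℝ) / #A - 2⁻¹ ^ #K|}
      = {x | ε * #A ≤ |∑ g ∈ A, ({x | pattern K g x = b}.indicator 1 x - (2⁻¹ : ℝ) ^ #K)|} := by
    ext x
    have h_sum : ∑ g ∈ A, ({x | pattern K g x = b}.indicator 1 x - (2⁻¹ : ℝ) ^ #K)
        = ((#{g ∈ A | pattern K g x = b} : ℝ) / #A - 2⁻¹ ^ #K) * #A := by
      rw [sub_mul, div_mul_cancel₀ _ hA_pos.ne', sum_sub_distrib, sum_const, nsmul_eq_mul,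
        mul_comm]
      simp [Set.indicator_apply, sum_boole]
    rw [Set.mem_ofPred_eq, Set.mem_ofPred_eq, h_sum, abs_mul, Nat.abs_cast,
      mul_le_mul_iff_left₀ hA_pos]
  rw [h_set, ← exp_nat_mul, mul_comm (#A : ℝ)]
  exact measureReal_abs_sum_indicator_sub_ge_le_of_coloring
    (fun g => measurable_pattern K g (measurableSet_singleton b)) (hμ.measureReal_pattern_eq K · b)
    hA c (fun j => hμ.iIndepSet_pattern (hc j) b) hε

theorem ae_tendsto_card_pattern_div [IsLeftCancelMul G] (hμ : IsBernoulliMeasure μ)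
    {F : ℕ → Finset G} (hF : ∀ n, (F n).Nonempty)
    (hsum : ∀ α ∈ Set.Ioo (0 : ℝ) 1, Summable fun n => α ^ #(F n)) (K : Finset G) (b : K → Bool) :
    ∀ᵐ x ∂μ, Tendsto (fun n => (#{g ∈ F n | pattern K g x = b} : ℝ) / #(F n)) atTop
      (𝓝 (2⁻¹ ^ #K)) := by
  have := hμ.isProbabilityMeasure
  refine ae_tendsto_of_forall_summable_measureReal_abs_sub_ge fun ε hε => ?_
  obtain ⟨C, α, hα, h_le⟩ := hμ.exists_measureReal_abs_card_pattern_div_sub_ge_le K b hε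
  exact ((hsum α hα).mul_left C).of_nonneg_of_le (fun _ => measureReal_nonneg)
    fun n => h_le (F n) (hF n)

end IsBernoulliMeasure

end Bernoulli

section Cylinder

variable {ι G : Type*}

theorem Continuous.exists_finset_forall_dist_lt {f : (G → Bool) → ℝ} (hf : Continuous f)
    {ε : ℝ} (hε : 0 < ε) :
    ∃ K : Finset G, ∀ y z : G → Bool, (∀ h ∈ K, y h = z h) → dist (f y) (f z) < ε := by
  have hV := CompactSpace.uniformContinuous_of_continuous hf (Metric.dist_mem_uniformity hε)
  rw [Pi.uniformity, Filter.mem_map, Filter.mem_iInf] at hV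
  obtain ⟨I, hI, V, hV, h_eq⟩ := hV
  refine ⟨hI.toFinset, fun y z hyz => ?_⟩
  have : (y, z) ∈ ⋂ i, V i := Set.mem_iInter.mpr fun i => by
    obtain ⟨t, ht, hts⟩ := mem_comap.mp (hV i)
    exact hts (by simpa [hyz i (hI.mem_toFinset.mpr i.2)] using refl_mem_uniformity ht)
  rw [← h_eq] at this
  exact this

theorem tendsto_sum_comp_restrict_div_card {μ : Measure (G → Bool)} [IsFiniteMeasure μ]
    {s : ℕ → Finset ι} {y : ι → G → Bool} {K : Finset G}
    (hy : ∀ b : K → Bool, Tendsto (fun n => (#{i ∈ s n | (fun h : K => y i h) = b} : ℝ) / #(s n))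
      atTop (𝓝 (μ.real {z | (fun h : K => z h) = b})))
    (φ : (K → Bool) → ℝ) :
    Tendsto (fun n => (∑ i ∈ s n, φ (fun h : K => y i h)) / #(s n)) atTop
      (𝓝 (∫ z, φ (fun h : K => z h) ∂μ)) := by
  have h_restrict : Measurable fun (z : G → Bool) (h : K) => z h :=
    measurable_pi_lambda _ fun _ => measurable_pi_apply _
  have h_avg (n : ℕ) : (∑ i ∈ s n, φ (fun h : K => y i h)) / #(s n)
      = ∑ b, (#{i ∈ s n | (fun h : K => y i h) = b} : ℝ) / #(s n) * φ b := by
    rw [← sum_fiberwise' (s n) (fun i (h : K) => y i h) φ, sum_div]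
    simp [div_mul_eq_mul_div]
  have h_int : ∫ z, φ (fun h : K => z h) ∂μ = ∑ b, μ.real {z | (fun h : K => z h) = b} * φ b := by
    rw [← integral_map h_restrict.aemeasurable (measurable_of_finite φ).aestronglyMeasurable,
      integral_fintype (Integrable.of_finite)]
    simp [map_measureReal_apply h_restrict (measurableSet_singleton _), Set.preimage]
  simp_rw [h_avg, h_int]
  exact tendsto_finsetSum _ fun b _ => (hy b).mul_const (φ b)

theorem dist_sum_div_card_le {s : Finset ι} {u v : ι → ℝ} {ε : ℝ} (hε : 0 ≤ ε)
    (h : ∀ i ∈ s, dist (u i) (v i) ≤ ε) :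
    dist ((∑ i ∈ s, u i) / #s) ((∑ i ∈ s, v i) / #s) ≤ ε := by
  rw [dist_eq, ← sub_div, ← sum_sub_distrib, abs_div, Nat.abs_cast]
  refine div_le_of_le_mul₀ (Nat.cast_nonneg _) hε ((abs_sum_le_sum_abs _ _).trans ?_)
  simpa [dist_eq, mul_comm] using sum_le_card_nsmul s _ ε h

theorem tendsto_sum_div_card_integral_of_tendsto_cylinder [Countable G] {μ : Measure (G → Bool)}
    [IsProbabilityMeasure μ] {s : ℕ → Finset ι} {y : ι → G → Bool}
    (hy : ∀ (K : Finset G) (b : K → Bool),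
      Tendsto (fun n => (#{i ∈ s n | (fun h : K => y i h) = b} : ℝ) / #(s n))
        atTop (𝓝 (μ.real {z | (fun h : K => z h) = b})))
    {f : (G → Bool) → ℝ} (hf : Continuous f) :
    Tendsto (fun n => (∑ i ∈ s n, f (y i)) / #(s n)) atTop (𝓝 (∫ z, f z ∂μ)) := by
  refine Metric.tendsto_nhds.mpr fun ε hε => ?_
  obtain ⟨K, hK⟩ := hf.exists_finset_forall_dist_lt (ε := ε / 3) (by positivity)
  set φ : (K → Bool) → ℝ := fun b => f fun g => if hg : g ∈ K then b ⟨g, hg⟩ else false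
  have h_approx (z : G → Bool) : dist (f z) (φ fun h : K => z h) ≤ ε / 3 :=
    (hK _ _ fun h hh => by simp [hh]).le
  have h_cont : Continuous fun z : G → Bool => φ fun h : K => z h :=
    continuous_of_discreteTopology.comp' (continuous_pi fun h : K => continuous_apply h.1)
  have h_int : dist (∫ z, φ (fun h : K => z h) ∂μ) (∫ z, f z ∂μ) ≤ ε / 3 := by
    rw [dist_eq_norm, ← integral_sub
      (h_cont.integrable_of_hasCompactSupport (HasCompactSupport.of_compactSpace _))
      (hf.integrable_of_hasCompactSupport (HasCompactSupport.of_compactSpace _))]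
    simpa using norm_integral_le_of_norm_le_const (μ := μ) (C := ε / 3)
      (f := fun z => (φ fun h : K => z h) - f z)
      (ae_of_all _ fun z => by rw [← dist_eq_norm, dist_comm]; exact h_approx z)
  filter_upwards [Metric.tendsto_nhds.mp (tendsto_sum_comp_restrict_div_card (hy K) φ) (ε / 3)
    (by positivity)] with n hn
  calc _ ≤ _ := dist_triangle4 _ ((∑ i ∈ s n, φ fun h : K => y i h) / #(s n))
        (∫ z, φ (fun h : K => z h) ∂μ) _
    _ < ε / 3 + ε / 3 + ε / 3 :=
        add_lt_add_of_lt_of_le (add_lt_add_of_le_of_lt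
          (dist_sum_div_card_le (by positivity) fun i _ => h_approx (y i)) hn) h_int
    _ = ε := by ring

end Cylinder


theorem ae_ergodic_averages_tendsto_integral_general
    {G : Type*} [Semigroup G] [IsCancelMul G] [Countable G]
    (F : ℕ → Finset G) (hF : IsFolner F)
    (hsum : ∀ α : ℝ, α ∈ Set.Ioo (0 : ℝ) 1 → Summable fun n => α ^ (F n).card)
    (μ : Measure (G → Bool))
    (hμ : ∀ (K : Finset G) (B : G → Bool),
      μ {x | ∀ h ∈ K, x h = B h} = (2 : ENNReal)⁻¹ ^ K.card) :
    ∀ᵐ x ∂μ, ∀ f : (G → Bool) → ℝ, Continuous f →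
      Tendsto (fun n => (∑ g ∈ F n, f (fun h => x (h * g))) / (F n).card)
        atTop (nhds (∫ y, f y ∂μ)) := by
  have := IsBernoulliMeasure.isProbabilityMeasure hμ
  have h_freq : ∀ᵐ x ∂μ, ∀ (K : Finset G) (b : K → Bool),
      Tendsto (fun n => (#{g ∈ F n | pattern K g x = b} : ℝ) / #(F n)) atTop
        (𝓝 (μ.real {z | (fun h : K => z h) = b})) := by
    refine ae_all_iff.mpr fun K => ae_all_iff.mpr fun b => ?_
    rw [IsBernoulliMeasure.measureReal_cylinder_eq hμ]
    exact IsBernoulliMeasure.ae_tendsto_card_pattern_div hμ hF.1 hsum K b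
  filter_upwards [h_freq] with x hx f hf
  exact tendsto_sum_div_card_integral_of_tendsto_cylinder (y := fun g h => x (h * g)) hx hf

/-- If `G` is a countably infinite cancellative semigroup and `(F n)` is a Følner
sequence with `∑ α^{|F n|} < ∞` for all `α ∈ (0,1)`, then for `λ`-almost every
`x ∈ {0,1}^G` (where `λ = μ` is the Bernoulli `(1/2,1/2)`-product measure,
characterized by its values on cylinder sets) and every continuous
`f : {0,1}^G → ℝ`, the averages `(1/|F n|) ∑_{g ∈ F n} f (σ_g x)` converge to
`∫ f dλ`, where `σ_g x = (h ↦ x (h * g))`. -/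
theorem ae_ergodic_averages_tendsto_integral
    {G : Type*} [Semigroup G] [IsCancelMul G] [Countable G] [Infinite G]
    (F : ℕ → Finset G) (hF : IsFolner F)
    (hsum : ∀ α : ℝ, α ∈ Set.Ioo (0 : ℝ) 1 → Summable fun n => α ^ (F n).card)
    (μ : Measure (G → Bool))
    (hμ : ∀ (K : Finset G) (B : G → Bool),
      μ {x | ∀ h ∈ K, x h = B h} = (2 : ENNReal)⁻¹ ^ K.card) :
    ∀ᵐ x ∂μ, ∀ f : (G → Bool) → ℝ, Continuous f →
      Tendsto (fun n => (∑ g ∈ F n, f (fun h => x (h * g))) / (F n).card)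
        atTop (nhds (∫ y, f y ∂μ)) :=
  ae_ergodic_averages_tendsto_integral_general F hF hsum μ hμ
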